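/- arXiv:2505.14614 — 4 statements merged into one kernel-verified Lean document; each statement's English description precedes it below -/
import Mathlib

section
/- Fix an integer r ≥ 1 and positive integers t₁, …, t_r. Then the function n ↦ ∑_{d₁,…,d_r ≥ 1, d₁+⋯+d_r ≤ n} d₁^{t₁} ⋯ d_r^{t_r} is given by a polynomial with rational coefficients in n, of degree t₁+⋯+t_r+r and with zero constant term (i.e. divisible by n). -/
/-!
Peeling off the first coordinate gives the recursion
`F_t(n) = ∑_{m<n} (n - m)^{t₁} F_{t'}(m)`, where `t' = (t₂, …, t_r)`.
By Faulhaber's formula `m ↦ ∑_{k<m} f(k)` is a polynomial for every polynomial `f`, so expanding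
`(n - m)^{t₁}` binomially shows that convolving a polynomial `P` of degree `D` in this way gives a
polynomial of degree at most `D + t₁ + 1`. Its coefficient of `n^(D + t₁ + 1)` is `lc(P)` times
`∑_j (-1)^j C(t₁, j) / (D + j + 1) = ∫₀¹ x^D (1 - x)^{t₁} dx > 0`, so each step raises the degree by
exactly `t₁ + 1`. The constant term vanishes because for `r ≥ 1` no tuple has sum `0`.
-/

open Polynomial Finset

noncomputable def powerSumPoly (p : ℕ) : ℚ[X] :=
  C ((p + 1 : ℚ)⁻¹) * (Polynomial.bernoulli (p + 1) - C (_root_.bernoulli (p + 1)))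

lemma eval_powerSumPoly (p n : ℕ) :
    (powerSumPoly p).eval (n : ℚ) = ∑ k ∈ range n, (k : ℚ) ^ p := by
  rw [powerSumPoly, eval_mul, eval_sub, eval_C, eval_C, ← sum_range_pow_eq_bernoulli_sub]
  field_simp

lemma natDegree_powerSumPoly_le (p : ℕ) : (powerSumPoly p).natDegree ≤ p + 1 := by
  rw [natDegree_le_iff_coeff_eq_zero]
  intro i hi
  rw [powerSumPoly, coeff_C_mul, coeff_sub, coeff_C, coeff_bernoulli, if_neg (by omega),
    if_neg (by omega)]
  simp

lemma coeff_powerSumPoly_succ (p : ℕ) : (powerSumPoly p).coeff (p + 1) = 1 / (p + 1) := by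
  rw [powerSumPoly, coeff_C_mul, coeff_sub, coeff_C, coeff_bernoulli, if_pos le_rfl,
    if_neg (by omega)]
  simp

noncomputable def sumRange (f : ℚ[X]) : ℚ[X] :=
  ∑ p ∈ range (f.natDegree + 1), C (f.coeff p) * powerSumPoly p

lemma eval_sumRange (f : ℚ[X]) (n : ℕ) :
    (sumRange f).eval (n : ℚ) = ∑ m ∈ range n, f.eval (m : ℚ) := by
  simp only [sumRange, eval_finsetSum, eval_mul, eval_C, eval_powerSumPoly, mul_sum,
    eval_eq_sum_range (p := f)]
  exact sum_comm

lemma natDegree_sumRange_le (f : ℚ[X]) : (sumRange f).natDegree ≤ f.natDegree + 1 :=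
  natDegree_sum_le_of_forall_le _ _ fun p hp =>
    (natDegree_C_mul_le _ _).trans <|
      (natDegree_powerSumPoly_le p).trans (by rw [mem_range] at hp; omega)

lemma coeff_sumRange_succ {f : ℚ[X]} {d : ℕ} (hf : f.natDegree ≤ d) :
    (sumRange f).coeff (d + 1) = f.coeff d / (d + 1) := by
  rw [sumRange, finsetSum_coeff, sum_eq_single d]
  · rw [coeff_C_mul, coeff_powerSumPoly_succ]; ring
  · intro p hp hpd
    rw [mem_range] at hp
    rw [coeff_C_mul,
      coeff_eq_zero_of_natDegree_lt ((natDegree_powerSumPoly_le p).trans_lt (by omega)), mul_zero]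
  · intro hd
    rw [mem_range] at hd
    rw [coeff_eq_zero_of_natDegree_lt (p := f) (by omega), C_0, zero_mul, coeff_zero]

lemma sum_choose_mul_neg_one_pow_div_pos (a b : ℕ) :
    0 < ∑ j ∈ range (b + 1), (b.choose j * (-1) ^ (b - j) : ℚ) / ((a + (b - j) : ℕ) + 1) := by
  have hexpand (x : ℝ) : x ^ a * (1 - x) ^ b =
      ∑ j ∈ range (b + 1), (b.choose j * (-1) ^ (b - j) : ℝ) * x ^ (a + (b - j)) := by
    rw [sub_eq_add_neg, add_pow, mul_sum]
    refine sum_congr rfl fun j _ => ?_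
    rw [neg_pow, pow_add]
    ring
  have hbeta : ((∑ j ∈ range (b + 1), (b.choose j * (-1) ^ (b - j) : ℚ) / ((a + (b - j) : ℕ) + 1) :
      ℚ) : ℝ) = ∫ x in (0 : ℝ)..1, x ^ a * (1 - x) ^ b := by
    simp_rw [hexpand]
    rw [intervalIntegral.integral_finsetSum fun j _ =>
      (by fun_prop : Continuous _).intervalIntegrable _ _]
    push_cast
    refine sum_congr rfl fun j _ => ?_
    rw [intervalIntegral.integral_const_mul, integral_pow]
    push_cast
    ring
  have hpos : 0 < ∫ x in (0 : ℝ)..1, x ^ a * (1 - x) ^ b :=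
    intervalIntegral.intervalIntegral_pos_of_pos_on
      ((by fun_prop : Continuous _).intervalIntegrable _ _)
      (fun x hx => mul_pos (pow_pos hx.1 a) (pow_pos (sub_pos.2 hx.2) b)) zero_lt_one
  exact_mod_cast hbeta ▸ hpos

noncomputable def powConv (t : ℕ) (P : ℚ[X]) : ℚ[X] :=
  ∑ j ∈ range (t + 1),
    C (t.choose j * (-1) ^ (t - j) : ℚ) * (sumRange (P * X ^ (t - j)) * X ^ j)

lemma eval_powConv (t : ℕ) (P : ℚ[X]) (n : ℕ) :
    (powConv t P).eval (n : ℚ) = ∑ m ∈ range n, ((n : ℚ) - m) ^ t * P.eval (m : ℚ) := by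
  simp only [powConv, eval_finsetSum, eval_mul, eval_C, eval_pow, eval_X, eval_sumRange, sum_mul,
    mul_sum]
  rw [sum_comm]
  refine sum_congr rfl fun m _ => ?_
  rw [sub_eq_add_neg, add_pow, sum_mul]
  refine sum_congr rfl fun j _ => ?_
  rw [neg_pow]
  ring

lemma natDegree_mul_X_pow_le {R : Type*} [Semiring R] (P : R[X]) (k : ℕ) :
    (P * X ^ k).natDegree ≤ P.natDegree + k :=
  natDegree_mul_le.trans (Nat.add_le_add_left (natDegree_X_pow_le k) _)

lemma natDegree_powConv_le (t : ℕ) (P : ℚ[X]) :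
    (powConv t P).natDegree ≤ P.natDegree + t + 1 := by
  refine natDegree_sum_le_of_forall_le _ _ fun j hj => (natDegree_C_mul_le _ _).trans ?_
  refine (natDegree_mul_X_pow_le _ j).trans ?_
  have := (natDegree_sumRange_le (P * X ^ (t - j))).trans
    (Nat.succ_le_succ (natDegree_mul_X_pow_le P (t - j)))
  simp only [mem_range] at hj
  omega

lemma coeff_powConv (t : ℕ) (P : ℚ[X]) :
    (powConv t P).coeff (P.natDegree + t + 1) = P.leadingCoeff *
      ∑ j ∈ range (t + 1),
        (t.choose j * (-1) ^ (t - j) : ℚ) / ((P.natDegree + (t - j) : ℕ) + 1) := by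
  rw [powConv, finsetSum_coeff, mul_sum]
  refine sum_congr rfl fun j hj => ?_
  rw [mem_range] at hj
  rw [show P.natDegree + t + 1 = P.natDegree + (t - j) + 1 + j by omega, coeff_C_mul,
    coeff_mul_X_pow, coeff_sumRange_succ (natDegree_mul_X_pow_le P (t - j)),
    coeff_mul_X_pow, leadingCoeff]
  ring

lemma degree_powConv (t : ℕ) {P : ℚ[X]} (hP : P ≠ 0) :
    (powConv t P).degree = (P.natDegree + t + 1 : ℕ) := by
  refine degree_eq_of_le_of_coeff_ne_zero
    (natDegree_le_iff_degree_le.1 (natDegree_powConv_le t P)) ?_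
  rw [coeff_powConv]
  exact mul_ne_zero (leadingCoeff_ne_zero.2 hP) (sum_choose_mul_neg_one_pow_div_pos _ _).ne'

def posTuples (r n : ℕ) : Finset (Fin r → ℕ) :=
  (Fintype.piFinset fun _ : Fin r => range (n + 1)).filter
    fun d => (∀ i, 1 ≤ d i) ∧ ∑ i, d i ≤ n

lemma mem_posTuples {r n : ℕ} {d : Fin r → ℕ} :
    d ∈ posTuples r n ↔ (∀ i, 1 ≤ d i) ∧ ∑ i, d i ≤ n := by
  simp only [posTuples, mem_filter, Fintype.mem_piFinset, mem_range, and_iff_right_iff_imp]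
  exact fun h i =>
    Nat.lt_succ_of_le ((single_le_sum (fun j _ => Nat.zero_le (d j)) (mem_univ i)).trans h.2)

noncomputable def tupleSum {r : ℕ} (t : Fin r → ℕ) (n : ℕ) : ℚ :=
  ∑ d ∈ posTuples r n, ∏ i, (d i : ℚ) ^ t i

lemma tupleSum_nil (t : Fin 0 → ℕ) (n : ℕ) : tupleSum t n = 1 := by
  have : posTuples 0 n = {Fin.elim0} := by
    ext d
    simp [mem_posTuples, Subsingleton.elim d Fin.elim0]
  simp [tupleSum, this]

lemma tupleSum_zero {r : ℕ} (hr : 1 ≤ r) (t : Fin r → ℕ) : tupleSum t 0 = 0 := by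
  have : posTuples r 0 = ∅ := by
    refine eq_empty_of_forall_notMem fun d hd => ?_
    obtain ⟨hpos, hsum⟩ := mem_posTuples.1 hd
    have := single_le_sum (fun j _ => Nat.zero_le (d j)) (mem_univ ⟨0, hr⟩)
    linarith [hpos ⟨0, hr⟩]
  simp [tupleSum, this]

lemma tupleSum_succ {r : ℕ} (t : Fin (r + 1) → ℕ) (n : ℕ) :
    tupleSum t n = ∑ m ∈ range n, ((n - m : ℕ) : ℚ) ^ t 0 * tupleSum (Fin.tail t) m := by
  simp only [tupleSum, mul_sum]
  rw [sum_sigma']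
  symm
  refine sum_nbij' (fun p => Fin.cons (n - p.1) p.2) (fun d => ⟨n - d 0, Fin.tail d⟩)
    ?_ ?_ ?_ ?_ ?_
  · rintro ⟨m, e⟩ h
    simp only [mem_sigma, mem_range, mem_posTuples] at h
    obtain ⟨hmn, he, hsum⟩ := h
    simp only [mem_posTuples, Fin.forall_fin_succ, Fin.cons_zero, Fin.cons_succ, Fin.sum_univ_succ]
    exact ⟨⟨by omega, he⟩, by omega⟩
  · intro d h
    simp only [mem_posTuples, Fin.forall_fin_succ, Fin.sum_univ_succ] at h
    obtain ⟨⟨hd0, hd⟩, hsum⟩ := h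
    simp only [mem_sigma, mem_range, mem_posTuples, Fin.tail]
    exact ⟨by omega, hd, by omega⟩
  · rintro ⟨m, e⟩ h
    simp only [mem_sigma, mem_range] at h
    simp [Fin.tail_cons, Nat.sub_sub_self h.1.le]
  · intro d h
    simp only [mem_posTuples, Fin.sum_univ_succ] at h
    rw [Nat.sub_sub_self (by omega), Fin.cons_self_tail]
  · rintro ⟨m, e⟩ _
    simp [Fin.prod_univ_succ, Fin.tail]

lemma exists_polynomial_tupleSum (r : ℕ) (t : Fin r → ℕ) :
    ∃ P : ℚ[X], P.degree = ((∑ i, t i + r : ℕ) : WithBot ℕ) ∧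
      ∀ n : ℕ, tupleSum t n = P.eval (n : ℚ) := by
  induction r with
  | zero => exact ⟨1, by simp, fun n => by simp [tupleSum_nil]⟩
  | succ r ih =>
    obtain ⟨P, hdeg, heval⟩ := ih (Fin.tail t)
    have hP : P ≠ 0 := fun h => by rw [h, degree_zero] at hdeg; exact WithBot.bot_ne_coe hdeg
    refine ⟨powConv (t 0) P, ?_, fun n => ?_⟩
    · rw [degree_powConv _ hP, natDegree_eq_of_degree_eq_some hdeg, Fin.sum_univ_succ]
      congr 1
      simp only [Fin.tail]
      omega
    · rw [tupleSum_succ, eval_powConv]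
      refine sum_congr rfl fun m hm => ?_
      rw [heval, Nat.cast_sub (mem_range.1 hm).le]

theorem stmt0_general (r : ℕ) (hr : 1 ≤ r) (t : Fin r → ℕ) :
    ∃ P : Polynomial ℚ, P.eval 0 = 0 ∧ P.degree = (((∑ i, t i) + r : ℕ) : WithBot ℕ) ∧
      ∀ n : ℕ,
        (∑ d ∈ (Fintype.piFinset fun _ : Fin r => Finset.range (n + 1)).filter
            (fun d => (∀ i, 1 ≤ d i) ∧ (∑ i, d i) ≤ n),
          ∏ i, (d i : ℚ) ^ (t i)) = P.eval (n : ℚ) := by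
  obtain ⟨P, hdeg, heval⟩ := exists_polynomial_tupleSum r t
  refine ⟨P, ?_, hdeg, heval⟩
  simpa [tupleSum_zero hr] using (heval 0).symm

/-- the sum ∑_{d₁,…,d_r ≥ 1, d₁+⋯+d_r ≤ n} ∏ dᵢ^{tᵢ} is a polynomial in n
of degree t₁+⋯+t_r+r with zero constant term. -/
theorem stmt0 (r : ℕ) (hr : 1 ≤ r) (t : Fin r → ℕ) (ht : ∀ i, 1 ≤ t i) :
    ∃ P : Polynomial ℚ, P.eval 0 = 0 ∧ P.degree = (((∑ i, t i) + r : ℕ) : WithBot ℕ) ∧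
      ∀ n : ℕ,
        (∑ d ∈ (Fintype.piFinset fun _ : Fin r => Finset.range (n + 1)).filter
            (fun d => (∀ i, 1 ≤ d i) ∧ (∑ i, d i) ≤ n),
          ∏ i, (d i : ℚ) ^ (t i)) = P.eval (n : ℚ) :=
  stmt0_general r hr t
end

section
/- Fix an integer r ≥ 1 and positive integers t₁, …, t_r. Then the function n ↦ ∑_{d₁,…,d_r ≥ 1, d₁+⋯+d_r = n} d₁^{t₁} ⋯ d_r^{t_r} is given by a polynomial with rational coefficients in n, of degree t₁+⋯+t_r+r−1 and with zero constant term. -/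
open Finset Polynomial


/-- Faulhaber polynomial: `(Fa p).eval n = ∑_{k<n} k^p`. -/
noncomputable def Fa (p : ℕ) : Polynomial ℚ :=
  ∑ i ∈ range (p + 1), C (_root_.bernoulli i * ((p + 1).choose i) / (p + 1)) * X ^ (p + 1 - i)

lemma Fa_eval (p n : ℕ) : (Fa p).eval (n : ℚ) = ∑ k ∈ range n, (k : ℚ) ^ p := by
  rw [_root_.sum_range_pow, Fa]
  simp [eval_finset_sum, div_mul_eq_mul_div]

lemma Fa_natDegree_le (p : ℕ) : (Fa p).natDegree ≤ p + 1 := by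
  apply Polynomial.natDegree_sum_le_of_forall_le
  intro i hi
  apply le_trans (Polynomial.natDegree_C_mul_le _ _)
  simpa using Nat.sub_le (p+1) i

lemma Fa_coeff_top (p : ℕ) : (Fa p).coeff (p + 1) = 1 / (p + 1) := by
  rw [Fa, Polynomial.finset_sum_coeff]
  rw [Finset.sum_eq_single 0]
  · simp
  · intro i hi hne
    rw [Polynomial.coeff_C_mul, Polynomial.coeff_X_pow, if_neg, mul_zero]
    simp only [mem_range] at hi
    omega
  · simp


lemma beta_sum (t : ℕ) : ∀ s : ℚ, 0 < s →
    ∑ m ∈ range (t + 1), (-1 : ℚ) ^ m * (t.choose m) / (s + m) =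
      (t.factorial : ℚ) / ∏ i ∈ range (t + 1), (s + i) := by
  induction t with
  | zero => intro s hs; simp
  | succ t ih =>
    intro s hs
    have hprod : ∀ (u : ℚ), 0 < u → (0:ℚ) < ∏ i ∈ range (t + 1), (u + i) := by
      intro u hu
      apply Finset.prod_pos
      intro i _
      positivity
    have key : ∑ m ∈ range (t + 2), (-1 : ℚ) ^ m * ((t+1).choose m) / (s + m)
        = (∑ m ∈ range (t + 1), (-1 : ℚ) ^ m * (t.choose m) / (s + m))
          - ∑ m ∈ range (t + 1), (-1 : ℚ) ^ m * (t.choose m) / ((s+1) + m) := by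
      rw [Finset.sum_range_succ' (fun m => (-1 : ℚ) ^ m * ((t+1).choose m) / (s + m)) (t+1)]
      push_cast
      have e1 : ∀ m ∈ range (t+1), (-1 : ℚ) ^ (m+1) * ((t+1).choose (m+1)) / (s + (m+1))
          = -((-1 : ℚ) ^ m * (t.choose m) / ((s+1) + m))
            + (-((-1 : ℚ) ^ m * (t.choose (m+1)) / (s + (m+1)))) := by
        intro m _
        rw [Nat.choose_succ_succ]
        push_cast
        have : s + (↑m + 1) ≠ 0 := by positivity
        field_simp
        ring
      rw [Finset.sum_congr rfl e1, Finset.sum_add_distrib]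
      have e2 : ∑ m ∈ range (t+1), (-((-1 : ℚ) ^ m * (t.choose (m+1)) / (s + (m+1))))
          = (∑ m ∈ range (t+2), (-1 : ℚ) ^ m * (t.choose m) / (s + m)) - 1/s := by
        have hcg : ∀ m ∈ range (t+1), -((-1 : ℚ) ^ m * (t.choose (m+1)) / (s + (↑m+1)))
            = (fun m => (-1 : ℚ) ^ m * (t.choose m) / (s + m)) (m+1) := by
          intro m _
          push_cast
          ring
        rw [Finset.sum_congr rfl hcg,
          Finset.sum_range_succ' (fun m => (-1 : ℚ) ^ m * (t.choose m) / (s + m)) (t+1)]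
        simp
      rw [e2]
      have e3 : ∑ m ∈ range (t+2), (-1 : ℚ) ^ m * (t.choose m) / (s + m)
          = ∑ m ∈ range (t+1), (-1 : ℚ) ^ m * (t.choose m) / (s + m) := by
        rw [Finset.sum_range_succ]
        simp [Nat.choose_eq_zero_of_lt (by omega : t < t+1)]
      rw [e3]
      simp
      ring
    rw [key, ih s hs, ih (s+1) (by positivity)]
    have hA : (0:ℚ) < ∏ i ∈ range (t + 1), (s + i) := hprod s hs
    have hB : (0:ℚ) < ∏ i ∈ range (t + 1), ((s+1) + i) := hprod (s+1) (by positivity)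
    have hshift : ∏ i ∈ range (t + 2), (s + i) = (∏ i ∈ range (t + 1), ((s+1) + i)) * s := by
      rw [Finset.prod_range_succ' (fun i => (s + i)) (t+1)]
      push_cast
      ring_nf
    have hlast : ∏ i ∈ range (t + 2), (s + i) = (∏ i ∈ range (t + 1), (s + i)) * (s + (t+1)) := by
      rw [Finset.prod_range_succ]
      push_cast
      ring_nf
    rw [Nat.factorial_succ]
    push_cast
    rw [hlast]
    have h1 : (∏ i ∈ range (t + 1), (s + i)) ≠ 0 := ne_of_gt hA
    have h2 : (∏ i ∈ range (t + 1), ((s+1) + i)) ≠ 0 := ne_of_gt hB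
    have h3 : s ≠ 0 := ne_of_gt hs
    have h4 : s + (↑t + 1) ≠ 0 := by positivity
    have hBs : (∏ i ∈ range (t + 1), ((s+1) + i)) = (∏ i ∈ range (t + 1), (s + i)) * (s + (t+1)) / s := by
      rw [← hlast, hshift]
      field_simp
    rw [hBs]
    field_simp
    ring

lemma conv (P : Polynomial ℚ) (t a : ℕ) (ha : P.natDegree = a) (hc : 0 < P.coeff a) :
    ∃ R : Polynomial ℚ, R.natDegree = a + t + 1 ∧ 0 < R.coeff (a + t + 1) ∧
      ∀ n : ℕ, (∑ e ∈ range n, P.eval (e : ℚ) * ((n : ℚ) - e) ^ t) = R.eval (n : ℚ) := by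
  set R : Polynomial ℚ := ∑ j ∈ range (t+1), ∑ k ∈ range (a+1),
      C ((t.choose j : ℚ) * (-1) ^ (t - j) * P.coeff k) * (X ^ j * Fa (t - j + k)) with hR
  have hdegle : R.natDegree ≤ a + t + 1 := by
    apply Polynomial.natDegree_sum_le_of_forall_le
    intro j hj
    apply Polynomial.natDegree_sum_le_of_forall_le
    intro k hk
    simp only [mem_range] at hj hk
    calc (C ((t.choose j : ℚ) * (-1) ^ (t - j) * P.coeff k) * (X ^ j * Fa (t - j + k))).natDegree
        ≤ (C ((t.choose j : ℚ) * (-1) ^ (t - j) * P.coeff k)).natDegree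
          + (X ^ j * Fa (t - j + k)).natDegree := Polynomial.natDegree_mul_le
      _ ≤ 0 + ((X ^ j : Polynomial ℚ).natDegree + (Fa (t - j + k)).natDegree) := by
          gcongr
          · exact le_of_eq (Polynomial.natDegree_C _)
          · exact Polynomial.natDegree_mul_le
      _ ≤ 0 + (j + (t - j + k + 1)) := by
          gcongr
          · exact le_of_eq (Polynomial.natDegree_X_pow _)
          · exact Fa_natDegree_le _
      _ ≤ a + t + 1 := by omega
  have hcoeff : R.coeff (a + t + 1) =
      P.coeff a * ∑ m ∈ range (t + 1), (-1 : ℚ) ^ m * (t.choose m) / ((a+1 : ℚ) + m) := by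
    rw [hR]
    rw [Polynomial.finset_sum_coeff]
    have e1 : ∀ j ∈ range (t+1),
        (∑ k ∈ range (a+1), C ((t.choose j : ℚ) * (-1) ^ (t - j) * P.coeff k)
          * (X ^ j * Fa (t - j + k))).coeff (a + t + 1)
        = (t.choose j : ℚ) * (-1) ^ (t - j) * P.coeff a * (1 / ((t - j + a : ℕ) + 1)) := by
      intro j hj
      simp only [mem_range] at hj
      rw [Polynomial.finset_sum_coeff]
      rw [Finset.sum_eq_single a]
      · rw [← mul_assoc, mul_comm (C _) (X ^ j), mul_assoc]
        have hidx : a + t + 1 = (t - j + a + 1) + j := by omega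
        rw [hidx, Polynomial.coeff_X_pow_mul, Polynomial.coeff_C_mul, Fa_coeff_top]
      · intro k hk hne
        simp only [mem_range] at hk
        have hklt : k < a := by omega
        rw [← mul_assoc, mul_comm (C _) (X ^ j), mul_assoc]
        have hidx : a + t + 1 = (t - j + a + 1) + j := by omega
        rw [hidx, Polynomial.coeff_X_pow_mul, Polynomial.coeff_C_mul,
          Polynomial.coeff_eq_zero_of_natDegree_lt
            (lt_of_le_of_lt (Fa_natDegree_le _) (by omega : t - j + k + 1 < t - j + a + 1)),
          mul_zero]
      · intro h
        exact absurd (mem_range.mpr (by omega)) h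
    rw [Finset.sum_congr rfl e1]
    have e2 : ∀ j ∈ range (t+1),
        (t.choose j : ℚ) * (-1) ^ (t - j) * P.coeff a * (1 / ((t - j + a : ℕ) + 1))
        = P.coeff a * (fun m => (-1 : ℚ) ^ m * (t.choose m) / ((a+1 : ℚ) + m)) (t - j) := by
      intro j hj
      simp only [mem_range] at hj
      simp only
      rw [Nat.choose_symm (by omega : j ≤ t)]
      push_cast
      ring
    rw [Finset.sum_congr rfl e2]
    have e3 := Finset.sum_range_reflect
      (fun m => P.coeff a * ((-1 : ℚ) ^ m * (t.choose m) / ((a+1 : ℚ) + m))) (t+1)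
    simp only [Nat.add_sub_cancel] at e3
    rw [e3, ← Finset.mul_sum]
  have hpos : 0 < R.coeff (a + t + 1) := by
    rw [hcoeff, beta_sum t ((a : ℚ) + 1) (by positivity)]
    have : (0:ℚ) < ∏ i ∈ range (t + 1), (((a:ℚ)+1) + i) := by
      apply Finset.prod_pos
      intro i _
      positivity
    have hf : (0:ℚ) < (t.factorial : ℚ) := by
      exact_mod_cast Nat.factorial_pos t
    positivity
  have hdeg : R.natDegree = a + t + 1 := by
    refine le_antisymm hdegle ?_
    exact Polynomial.le_natDegree_of_ne_zero (ne_of_gt hpos)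
  refine ⟨R, hdeg, hpos, fun n => ?_⟩
  have hP : ∀ e : ℕ, P.eval (e:ℚ) = ∑ k ∈ range (a+1), P.coeff k * (e:ℚ)^k := by
    intro e
    rw [← ha]
    exact Polynomial.eval_eq_sum_range _
  calc ∑ e ∈ range n, P.eval (e:ℚ) * ((n:ℚ) - e)^t
      = ∑ e ∈ range n, ∑ j ∈ range (t+1), ∑ k ∈ range (a+1),
          (t.choose j : ℚ) * (-1)^(t-j) * P.coeff k * ((n:ℚ)^j * (e:ℚ)^(t-j+k)) := by
        refine Finset.sum_congr rfl fun e he => ?_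
        rw [hP e]
        have hbin : ((n:ℚ) - e)^t
            = ∑ j ∈ range (t+1), (n:ℚ)^j * (-(e:ℚ))^(t-j) * t.choose j := by
          rw [sub_eq_add_neg]
          exact add_pow _ _ t
        rw [hbin, Finset.sum_mul_sum, Finset.sum_comm]
        refine Finset.sum_congr rfl fun j hj => Finset.sum_congr rfl fun k hk => ?_
        rw [neg_pow, pow_add]
        ring
    _ = ∑ j ∈ range (t+1), ∑ k ∈ range (a+1),
          (t.choose j : ℚ) * (-1)^(t-j) * P.coeff k
            * ((n:ℚ)^j * ∑ e ∈ range n, (e:ℚ)^(t-j+k)) := by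
        rw [Finset.sum_comm]
        refine Finset.sum_congr rfl fun j hj => ?_
        rw [Finset.sum_comm]
        refine Finset.sum_congr rfl fun k hk => ?_
        rw [Finset.mul_sum, Finset.mul_sum]
    _ = R.eval (n:ℚ) := by
        rw [hR, Polynomial.eval_finset_sum]
        refine Finset.sum_congr rfl fun j hj => ?_
        rw [Polynomial.eval_finset_sum]
        refine Finset.sum_congr rfl fun k hk => ?_
        rw [Polynomial.eval_mul, Polynomial.eval_C, Polynomial.eval_mul, Polynomial.eval_pow,
          Polynomial.eval_X, Fa_eval]


noncomputable def S (r : ℕ) (t : Fin r → ℕ) (n : ℕ) : ℚ :=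
  ∑ d ∈ (Fintype.piFinset fun _ : Fin r => Finset.range (n + 1)).filter
      (fun d => (∀ i, 1 ≤ d i) ∧ (∑ i, d i) = n),
    ∏ i, (d i : ℚ) ^ (t i)

lemma S_zero (r : ℕ) (t : Fin (r+1) → ℕ) : S (r+1) t 0 = 0 := by
  apply Finset.sum_eq_zero
  intro d hd
  simp only [Finset.mem_filter] at hd
  obtain ⟨-, h1, h2⟩ := hd
  exfalso
  have : 1 ≤ ∑ i, d i := le_trans (h1 0) (Finset.single_le_sum (fun i _ => Nat.zero_le _) (mem_univ 0))
  omega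

lemma S_one (t : Fin 1 → ℕ) (ht : 1 ≤ t 0) (n : ℕ) : S 1 t n = (n : ℚ) ^ (t 0) := by
  cases n with
  | zero =>
    rw [S_zero 0 t]
    rw [Nat.cast_zero, zero_pow (by omega)]
  | succ m =>
    unfold S
    have hset : (Fintype.piFinset fun _ : Fin 1 => Finset.range (m + 1 + 1)).filter
        (fun d => (∀ i, 1 ≤ d i) ∧ (∑ i, d i) = m + 1) = {fun _ => m + 1} := by
      ext d
      simp only [Finset.mem_filter, Fintype.mem_piFinset, Finset.mem_range,
        Finset.mem_singleton, Fin.sum_univ_one]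
      constructor
      · rintro ⟨-, -, h2⟩
        funext i
        have : i = 0 := Subsingleton.elim _ _
        rw [this, h2]
      · intro h
        subst h
        refine ⟨fun i => ?_, fun i => ?_, rfl⟩ <;> simp
    rw [hset, Finset.sum_singleton, Fin.prod_univ_one]

lemma S_rec (r : ℕ) (t : Fin (r + 1 + 1) → ℕ) (n : ℕ) :
    S (r + 1 + 1) t n = ∑ e ∈ range n,
      S (r + 1) (fun i => t i.castSucc) e * ((n : ℚ) - e) ^ (t (Fin.last (r+1))) := by
  unfold S
  rw [Finset.sum_congr rfl (fun e (he : e ∈ range n) => Finset.sum_mul _ _ _), Finset.sum_sigma']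
  refine Finset.sum_nbij' (i := fun d => ⟨∑ i : Fin (r+1), d i.castSucc, fun i => d i.castSucc⟩)
    (j := fun p => Fin.snoc p.2 (n - p.1)) ?_ ?_ ?_ ?_ ?_
  · -- forward membership
    intro d hd
    simp only [Finset.mem_filter, Fintype.mem_piFinset, Finset.mem_range] at hd
    obtain ⟨hle, h1, h2⟩ := hd
    rw [Fin.sum_univ_castSucc] at h2
    simp only [Finset.mem_sigma, Finset.mem_range, Finset.mem_filter, Fintype.mem_piFinset]
    have hlast : 1 ≤ d (Fin.last (r+1)) := h1 _
    refine ⟨by omega, ⟨fun i => ?_, fun i => h1 _, ?_⟩⟩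
    · rw [Nat.lt_succ_iff]
      exact Finset.single_le_sum (f := fun i : Fin (r+1) => d i.castSucc)
        (fun i _ => Nat.zero_le _) (mem_univ i)
    · trivial
  · -- backward membership
    rintro ⟨e, d'⟩ hp
    simp only [Finset.mem_sigma, Finset.mem_range, Finset.mem_filter,
      Fintype.mem_piFinset] at hp
    obtain ⟨hen, ⟨hle, h1, h2⟩⟩ := hp
    simp only [Finset.mem_filter, Fintype.mem_piFinset, Finset.mem_range]
    refine ⟨fun i => ?_, fun i => ?_, ?_⟩
    · refine Fin.lastCases ?_ ?_ i
      · rw [Fin.snoc_last]; omega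
      · intro j
        rw [Fin.snoc_castSucc]
        have := hle j
        omega
    · refine Fin.lastCases ?_ ?_ i
      · rw [Fin.snoc_last]; omega
      · intro j
        rw [Fin.snoc_castSucc]
        exact h1 j
    · rw [Fin.sum_univ_castSucc]
      simp only [Fin.snoc_castSucc, Fin.snoc_last]
      omega
  · -- left inverse
    intro d hd
    simp only [Finset.mem_filter, Fintype.mem_piFinset, Finset.mem_range] at hd
    obtain ⟨hle, h1, h2⟩ := hd
    rw [Fin.sum_univ_castSucc] at h2
    funext i
    refine Fin.lastCases ?_ ?_ i
    · dsimp only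
      rw [Fin.snoc_last]
      omega
    · intro j
      dsimp only
      rw [Fin.snoc_castSucc]
  · -- right inverse
    rintro ⟨e, d'⟩ hp
    simp only [Finset.mem_sigma, Finset.mem_range, Finset.mem_filter,
      Fintype.mem_piFinset] at hp
    obtain ⟨hen, ⟨hle, h1, h2⟩⟩ := hp
    have hfst : (∑ i : Fin (r+1), (Fin.snoc d' (n - e) : Fin (r+1+1) → ℕ) i.castSucc) = e := by
      simp only [Fin.snoc_castSucc]
      exact h2
    refine Sigma.ext hfst ?_
    rw [heq_eq_eq]
    funext i
    simp
  · -- values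
    intro d hd
    simp only [Finset.mem_filter, Fintype.mem_piFinset, Finset.mem_range] at hd
    obtain ⟨hle, h1, h2⟩ := hd
    rw [Fin.sum_univ_castSucc] at h2
    rw [Fin.prod_univ_castSucc]
    congr 1
    have hsub : n - (∑ i : Fin (r+1), d i.castSucc) = d (Fin.last (r+1)) := by omega
    have hcast : ((n : ℚ) - (∑ i : Fin (r+1), d i.castSucc : ℕ)) = ((d (Fin.last (r+1)) : ℕ) : ℚ) := by
      rw [← Nat.cast_sub (by omega), hsub]
    rw [hcast]


lemma aux : ∀ (r : ℕ) (t : Fin (r+1) → ℕ), (∀ i, 1 ≤ t i) →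
    ∃ P : Polynomial ℚ, P.natDegree = (∑ i, t i) + r ∧ 0 < P.coeff ((∑ i, t i) + r) ∧
      ∀ n : ℕ, S (r+1) t n = P.eval (n : ℚ) := by
  intro r
  induction r with
  | zero =>
    intro t ht
    refine ⟨X ^ (t 0), ?_, ?_, ?_⟩
    · rw [Polynomial.natDegree_X_pow]
      simp [Fin.sum_univ_one]
    · simp [Polynomial.coeff_X_pow, Fin.sum_univ_one]
    · intro n
      rw [S_one t (ht 0), Polynomial.eval_pow, Polynomial.eval_X]
  | succ r ih =>
    intro t ht
    obtain ⟨P, hdeg, hpos, hev⟩ := ih (fun i => t i.castSucc) (fun i => ht _)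
    set A := (∑ i : Fin (r+1), t i.castSucc) + r with hA
    obtain ⟨R, hRdeg, hRpos, hRev⟩ := conv P (t (Fin.last (r+1))) A hdeg hpos
    have hsum : A + t (Fin.last (r+1)) + 1 = (∑ i : Fin (r+2), t i) + (r+1) := by
      rw [Fin.sum_univ_castSucc, hA]
      omega
    refine ⟨R, by rw [← hsum]; exact hRdeg, by rw [← hsum]; exact hRpos, fun n => ?_⟩
    rw [S_rec r t n, ← hRev n]
    exact Finset.sum_congr rfl fun e he => by rw [hev e]

/-- the sum ∑_{d₁,…,d_r ≥ 1, d₁+⋯+d_r = n} ∏ dᵢ^{tᵢ} is a polynomial in n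
of degree t₁+⋯+t_r+r−1 with zero constant term. -/
theorem stmt1 (r : ℕ) (hr : 1 ≤ r) (t : Fin r → ℕ) (ht : ∀ i, 1 ≤ t i) :
    ∃ P : Polynomial ℚ, P.eval 0 = 0 ∧ P.degree = (((∑ i, t i) + r - 1 : ℕ) : WithBot ℕ) ∧
      ∀ n : ℕ,
        (∑ d ∈ (Fintype.piFinset fun _ : Fin r => Finset.range (n + 1)).filter
            (fun d => (∀ i, 1 ≤ d i) ∧ (∑ i, d i) = n),
          ∏ i, (d i : ℚ) ^ (t i)) = P.eval (n : ℚ) := by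
  obtain ⟨r', rfl⟩ : ∃ r', r = r' + 1 := ⟨r - 1, by omega⟩
  obtain ⟨P, hdeg, hpos, hev⟩ := aux r' t ht
  have hP0 : P ≠ 0 := fun h => by simp [h] at hpos
  refine ⟨P, ?_, ?_, fun n => hev n⟩
  · have h0 := hev 0
    rw [S_zero r' t] at h0
    simpa using h0.symm
  · rw [Polynomial.degree_eq_natDegree hP0, hdeg]
    congr 1
end

section
/- Let x = e^z, y = e^w be formal exponentials, and set f = log((q)_∞) + ∑_{n≥1} log(1 − x y qⁿ) − ∑_{n≥1} log(1 − x qⁿ) − log((yq)_∞), where (a)_∞ = ∏_{n≥0}(1−a qⁿ). Let D_x = x d/dx. Then for every t ≥ 1, evaluating at x = 1 gives the identity D_x^t f |_{x=1} = −∑_{j ≥ 1} ((t+j−1)!/j!) [t+j] w^j in ℚ[[q]][[w]], where [s] = (1/(s−1)!) ∑_{n,d ≥ 1} d^{s−1} q^{nd}. -/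
/-! For `t ≥ 1` only the terms of `f` containing `x^d = e^{dz}` contribute to the
`z^t`-coefficient, and `t!/d` times the `z^t`-coefficient of `e^{dz}` is `d^{t-1}`; this gives
`D_x^t f|_{x=1} = ∑_{n,d} d^{t-1} (1 - y^d) q^{nd}`. Expanding `y^d = e^{wd}`, the constant term
in `w` cancels and the `w^j`-coefficient is `-∑_{n,d} d^{t+j-1}/j! q^{nd} = -((t+j-1)!/j!) [t+j]`.
-/

open PowerSeries

/-- Pairs (n,d) with n,d ≥ 1 and n·d = N. -/
def qPairs (N : ℕ) : Finset (ℕ × ℕ) :=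
  (Finset.range (N + 1) ×ˢ Finset.range (N + 1)).filter
    (fun p => 1 ≤ p.1 ∧ 1 ≤ p.2 ∧ p.1 * p.2 = N)

/-- coefficient of z^k in e^{dz}, namely d^k/k!. -/
noncomputable def expCoeff (k d : ℕ) : ℚ := (d : ℚ) ^ k / (k.factorial : ℚ)

/-- The depth-one bracket [s] = (1/(s-1)!) ∑_{n,d≥1} d^{s-1} q^{nd} ∈ ℚ[[q]]. -/
noncomputable def bracket (s : ℕ) : PowerSeries ℚ :=
  PowerSeries.mk fun N => ((s - 1).factorial : ℚ)⁻¹ * ∑ p ∈ qPairs N, (p.2 : ℚ) ^ (s - 1)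

/-- f = log((q)_∞) + ∑_{n≥1} log(1-xyqⁿ) - ∑_{n≥1} log(1-xqⁿ) - log((yq)_∞)
with x = e^z, y = e^w, all logs expanded by log(1-u) = -∑_{d≥1} u^d/d, viewed as a
power series in z whose coefficients are power series in w over ℚ[[q]].
The coefficient of z^k w^j q^N is ∑_{nd=N} (1/d)·(coefficient of z^k w^j in
(-x^d y^d + x^d + y^d - 1)). -/
noncomputable def fBO : PowerSeries (PowerSeries (PowerSeries ℚ)) :=
  PowerSeries.mk fun k => PowerSeries.mk fun j => PowerSeries.mk fun N =>
    ∑ p ∈ qPairs N, ((p.2 : ℚ))⁻¹ *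
      (-(expCoeff k p.2) * (expCoeff j p.2)
        + (expCoeff k p.2) * (if j = 0 then 1 else 0)
        + (if k = 0 then 1 else 0) * (expCoeff j p.2)
        - (if k = 0 then 1 else 0) * (if j = 0 then 1 else 0))

lemma expCoeff_zero_left (d : ℕ) : expCoeff 0 d = 1 := by
  simp [expCoeff]

lemma factorial_mul_inv_mul_expCoeff {t d : ℕ} (ht : t ≠ 0) (hd : d ≠ 0) :
    (t.factorial : ℚ) * ((d : ℚ)⁻¹ * expCoeff t d) = (d : ℚ) ^ (t - 1) := by
  obtain ⟨s, rfl⟩ : ∃ s, t = s + 1 := ⟨t - 1, by omega⟩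
  simp only [expCoeff, Nat.add_sub_cancel, pow_succ]
  field_simp

lemma pow_mul_expCoeff {t d : ℕ} (ht : t ≠ 0) (j : ℕ) :
    (d : ℚ) ^ (t - 1) * expCoeff j d = (d : ℚ) ^ (t + j - 1) / j.factorial := by
  rw [expCoeff, show t + j - 1 = t - 1 + j by omega, pow_add, mul_div_assoc]

lemma snd_ne_zero_of_mem_qPairs {N : ℕ} {p : ℕ × ℕ} (hp : p ∈ qPairs N) : p.2 ≠ 0 := by
  simp only [qPairs, Finset.mem_filter] at hp
  omega

lemma coeff_coeff_coeff_fBO {k : ℕ} (hk : k ≠ 0) (j N : ℕ) :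
    coeff N (coeff j (coeff k fBO))
      = ∑ p ∈ qPairs N,
          (p.2 : ℚ)⁻¹ * expCoeff k p.2 * ((if j = 0 then 1 else 0) - expCoeff j p.2) := by
  simp only [fBO, coeff_mk, if_neg hk]
  refine Finset.sum_congr rfl fun p _ => ?_
  ring

lemma factorial_smul_coeff_fBO {t : ℕ} (ht : t ≠ 0) :
    (t.factorial : ℚ) • coeff t fBO = mk fun j => mk fun N =>
      ∑ p ∈ qPairs N, (p.2 : ℚ) ^ (t - 1) * ((if j = 0 then 1 else 0) - expCoeff j p.2) := by
  ext j N
  simp only [coeff_smul, map_smul, coeff_mk, smul_eq_mul, coeff_coeff_coeff_fBO ht, Finset.mul_sum]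
  refine Finset.sum_congr rfl fun p hp => ?_
  rw [← factorial_mul_inv_mul_expCoeff ht (snd_ne_zero_of_mem_qPairs hp)]
  ring

lemma mk_sum_pow_mul_expCoeff {t : ℕ} (ht : t ≠ 0) (j : ℕ) :
    (mk fun N => ∑ p ∈ qPairs N, (p.2 : ℚ) ^ (t - 1) * expCoeff j p.2)
      = (((t + j - 1).factorial : ℚ) / j.factorial) • bracket (t + j) := by
  ext N
  have : ((t + j - 1).factorial : ℚ) ≠ 0 := by positivity
  simp only [bracket, coeff_mk, map_smul, smul_eq_mul, pow_mul_expCoeff ht, ← Finset.sum_div]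
  field_simp

/-- for t ≥ 1, D_x^t f |_{x=1} (= t! times the z^t-coefficient of f)
equals -∑_{j≥1} ((t+j-1)!/j!) [t+j] w^j in ℚ[[q]][[w]]. -/
theorem stmt5 (t : ℕ) (ht : 1 ≤ t) :
    (t.factorial : ℚ) • (PowerSeries.coeff (R := PowerSeries (PowerSeries ℚ)) t fBO)
      = PowerSeries.mk fun j => if j = 0 then 0 else
          (-(((t + j - 1).factorial : ℚ) / (j.factorial : ℚ))) • bracket (t + j) := by
  have ht0 : t ≠ 0 := by omega
  rw [factorial_smul_coeff_fBO ht0]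
  congr 1
  funext j
  split_ifs with hj
  · subst hj
    ext N
    simp only [expCoeff_zero_left, sub_self, mul_zero, Finset.sum_const_zero, coeff_mk, map_zero]
  · simp only [zero_sub, mul_neg, Finset.sum_neg_distrib, neg_smul,
      ← mk_sum_pow_mul_expCoeff ht0]
    ext N
    simp only [coeff_mk, map_neg]
end

section
/- Let x = e^z and y = e^w. For every integer m ≥ 2, the coefficient of z^{m−1}w (and also of z w^{m−1}) in the formal power series expansion of (q)_∞(xyq)_∞/((xq)_∞(yq)_∞) ∈ ℚ[[q]][[z,w]] equals −[m], where [m] = (1/(m−1)!)∑_{n,d≥1} d^{m−1} q^{nd}. -/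
open PowerSeries

/-- ℚ[[w]] -/
abbrev Rw : Type := PowerSeries ℚ
/-- ℚ[[w]][[z]] -/
abbrev Rz : Type := PowerSeries Rw
/-- ℚ[[w]][[z]][[q]] -/
abbrev Rq : Type := PowerSeries Rz

/-- x = e^z ∈ ℚ[[w]][[z]]. -/
noncomputable def xe : Rz := PowerSeries.mk fun k => PowerSeries.C (R := ℚ) ((k.factorial : ℚ)⁻¹)
/-- y = e^w ∈ ℚ[[w]][[z]]. -/
noncomputable def ye : Rz := PowerSeries.C (R := Rw) (PowerSeries.mk fun j => (j.factorial : ℚ)⁻¹)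

/-- partial numerator ∏_{n=1}^N (1-qⁿ)(1-xyqⁿ). -/
noncomputable def numerF (N : ℕ) : Rq :=
  ∏ n ∈ Finset.Icc 1 N,
    ((1 - PowerSeries.X ^ n) * (1 - PowerSeries.C (R := Rz) (xe * ye) * PowerSeries.X ^ n))

/-- partial denominator ∏_{n=1}^N (1-xqⁿ)(1-yqⁿ). -/
noncomputable def denomF (N : ℕ) : Rq :=
  ∏ n ∈ Finset.Icc 1 N,
    ((1 - PowerSeries.C (R := Rz) xe * PowerSeries.X ^ n) *
      (1 - PowerSeries.C (R := Rz) ye * PowerSeries.X ^ n))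

/-- F = (q)_∞(xyq)_∞/((xq)_∞(yq)_∞) ∈ ℚ[[w]][[z]][[q]]: its q^N-coefficient is that of
the stabilizing partial product ∏_{n=1}^N (1-qⁿ)(1-xyqⁿ)/((1-xqⁿ)(1-yqⁿ)). -/
noncomputable def FBO : Rq :=
  PowerSeries.mk fun N =>
    PowerSeries.coeff (R := Rz) N (numerF N * PowerSeries.invOfUnit (denomF N) 1)

/-- The coefficient of z^m w^n in F, an element of ℚ[[q]]. -/
noncomputable def zwCoeff (m n : ℕ) : PowerSeries ℚ :=
  PowerSeries.mk fun N =>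
    PowerSeries.coeff (R := ℚ) n (PowerSeries.coeff (R := Rw) m (PowerSeries.coeff (R := Rz) N FBO))

/-! Only the part of `F` linear in `w` (resp. `z`) is needed, so one may reduce modulo `w²`
(resp. `z²`), i.e. pass to dual numbers, where `y = 1 + ε` (resp. `x = 1 + ε`) with `ε² = 0`.
There each factor `(1 - qⁿ)(1 - xyqⁿ) / ((1 - xqⁿ)(1 - yqⁿ))` becomes
`1 + ε (1 / (1 - qⁿ) - 1 / (1 - xqⁿ))`, so the product is
`1 + ε ∑_{n,d ≥ 1} (1 - xᵈ) q^{nd}`, and the `z^{m-1}`-coefficient of `1 - e^{dz}` is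
`-d^{m-1} / (m-1)!`. -/

open DualNumber TrivSqZeroExt

theorem Finset.prod_one_add_mul_of_mul_self_eq_zero {ι T : Type*} [CommRing T] {e : T}
    (he : e * e = 0) (s : Finset ι) (g : ι → T) :
    ∏ i ∈ s, (1 + e * g i) = 1 + e * ∑ i ∈ s, g i := by
  classical
  induction s using Finset.induction with
  | empty => simp
  | insert i s hi ih =>
    rw [Finset.prod_insert hi, Finset.sum_insert hi, ih]
    linear_combination g i * (∑ j ∈ s, g j) * he

/-- With `P = (1 - a)⁻¹`, `Q = (1 - x a)⁻¹` and `y = 1 + e`, `e² = 0`: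
`(1 - a)(1 - x y a) / ((1 - x a)(1 - y a)) = 1 + e (P - Q)`. -/
theorem one_sub_mul_one_sub_eq_one_add_mul_of_mul_self_eq_zero {T : Type*} [CommRing T]
    {e a x P Q : T} (he : e * e = 0) (hP : (1 - a) * P = 1) (hQ : (1 - x * a) * Q = 1) :
    (1 - a) * (1 - x * (1 + e) * a) = (1 + e * (P - Q)) * ((1 - x * a) * (1 - (1 + e) * a)) := by
  linear_combination (e * (1 - a)) * hQ - (e * (1 - x * a)) * hP
    + (a * (P - Q) * (1 - x * a)) * he

namespace PowerSeries

variable {R S : Type*} [CommRing R] [CommRing S]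

theorem map_invOfUnit_one (φ : R →+* S) {f : R⟦X⟧} (hf : constantCoeff f = 1) :
    map φ (invOfUnit f 1) = invOfUnit (map φ f) 1 := by
  have hφf : constantCoeff (map φ f) = ((1 : Sˣ) : S) := by
    rw [← coeff_zero_eq_constantCoeff_apply, coeff_map, coeff_zero_eq_constantCoeff_apply, hf,
      map_one, Units.val_one]
  refine left_inv_eq_right_inv (a := map φ f) ?_ (mul_invOfUnit _ 1 hφf)
  rw [← map_mul, invOfUnit_mul f 1 (by rw [hf, Units.val_one]), map_one]

noncomputable def geomSeries (a : R) (n : ℕ) : R⟦X⟧ :=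
  mk fun k => if n ∣ k then a ^ (k / n) else 0

theorem geomSeries_eq_expand_rescale (a : R) {n : ℕ} (hn : n ≠ 0) :
    geomSeries a n = expand n hn (rescale a (mk 1)) := by
  ext k
  rw [coeff_expand, geomSeries, coeff_mk]
  split_ifs <;> simp [coeff_rescale]

theorem one_sub_C_mul_X_pow_mul_geomSeries (a : R) {n : ℕ} (hn : n ≠ 0) :
    (1 - C a * X ^ n) * geomSeries a n = 1 := by
  have hgeom : (1 - C a * X) * rescale a (mk 1) = 1 := by
    rw [← rescale_X, ← map_one (rescale a), ← map_sub, ← map_mul, mul_comm,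
      mk_one_mul_one_sub_eq_one, map_one]
  rw [geomSeries_eq_expand_rescale a hn, ← expand_X n hn, ← expand_C n hn a,
    ← map_one (expand n hn), ← map_mul, ← map_sub, ← map_mul, hgeom, map_one]

theorem coeff_geomSeries (a : R) (n k : ℕ) :
    coeff k (geomSeries a n) = if n ∣ k then a ^ (k / n) else 0 :=
  coeff_mk _ _

variable (R) in
noncomputable def toDualNumber : R⟦X⟧ →+* R[ε] where
  toFun f := inl (constantCoeff f) + inr (coeff 1 f)
  map_one' := by ext <;> simp
  map_mul' f g := by ext <;> simp [coeff_one_mul]; ring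
  map_zero' := by ext <;> simp
  map_add' f g := by ext <;> simp

@[simp]
theorem fst_toDualNumber (f : R⟦X⟧) : (toDualNumber R f).fst = constantCoeff f := by
  simp [toDualNumber]

@[simp]
theorem snd_toDualNumber (f : R⟦X⟧) : (toDualNumber R f).snd = coeff 1 f := by
  simp [toDualNumber]

theorem toDualNumber_C (a : R) : toDualNumber R (C a) = inl a := by
  ext <;> simp

end PowerSeries

theorem qPairs_eq_divisorsAntidiagonal (N : ℕ) : qPairs N = N.divisorsAntidiagonal := by
  ext ⟨n, d⟩
  simp only [qPairs, Finset.mem_filter, Finset.mem_product, Finset.mem_range,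
    Nat.mem_divisorsAntidiagonal]
  constructor
  · rintro ⟨-, hn, hd, rfl⟩
    exact ⟨rfl, Nat.mul_ne_zero (by omega) (by omega)⟩
  · rintro ⟨rfl, hN⟩
    obtain ⟨hn, hd⟩ := Nat.mul_ne_zero_iff.mp hN
    exact ⟨⟨Nat.lt_succ_of_le (Nat.le_mul_of_pos_right n (by omega)),
      Nat.lt_succ_of_le (Nat.le_mul_of_pos_left d (by omega))⟩, by omega, by omega, rfl⟩

theorem sum_Icc_ite_dvd_eq_sum_qPairs {M : Type*} [AddCommMonoid M] (N : ℕ) (f : ℕ → M) :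
    ∑ n ∈ Finset.Icc 1 N, (if n ∣ N then f (N / n) else 0) = ∑ p ∈ qPairs N, f p.2 := by
  rw [qPairs_eq_divisorsAntidiagonal, Nat.sum_divisorsAntidiagonal (fun _ d => f d),
    ← Finset.sum_filter]
  -- `Nat.divisors N` is defined as `{d ∈ Ico 1 (N + 1) | d ∣ N}`
  rfl

section QProduct

variable {T S : Type*} [CommRing T] [CommRing S]

noncomputable def qProdNum (x y : T) (N : ℕ) : T⟦X⟧ :=
  ∏ n ∈ Finset.Icc 1 N, ((1 - X ^ n) * (1 - C (x * y) * X ^ n))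

noncomputable def qProdDen (x y : T) (N : ℕ) : T⟦X⟧ :=
  ∏ n ∈ Finset.Icc 1 N, ((1 - C x * X ^ n) * (1 - C y * X ^ n))

theorem qProdNum_comm (x y : T) (N : ℕ) : qProdNum x y N = qProdNum y x N := by
  simp only [qProdNum, mul_comm x y]

theorem qProdDen_comm (x y : T) (N : ℕ) : qProdDen x y N = qProdDen y x N := by
  simp only [qProdDen, mul_comm (1 - C x * _)]

theorem constantCoeff_qProdDen (x y : T) (N : ℕ) : constantCoeff (qProdDen x y N) = 1 := by
  rw [qProdDen, map_prod]
  refine Finset.prod_eq_one fun n hn => ?_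
  simp [zero_pow (Nat.one_le_iff_ne_zero.mp (Finset.mem_Icc.mp hn).1)]

theorem map_qProdNum (φ : T →+* S) (x y : T) (N : ℕ) :
    map φ (qProdNum x y N) = qProdNum (φ x) (φ y) N := by
  simp [qProdNum, map_prod]

theorem map_qProdDen (φ : T →+* S) (x y : T) (N : ℕ) :
    map φ (qProdDen x y N) = qProdDen (φ x) (φ y) N := by
  simp [qProdDen, map_prod]

theorem qProdNum_one_add_eq_mul_qProdDen {e : T} (he : e * e = 0) (x : T) (N : ℕ) :
    qProdNum x (1 + e) N =
      (1 + C e * ∑ n ∈ Finset.Icc 1 N, (geomSeries 1 n - geomSeries x n)) *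
        qProdDen x (1 + e) N := by
  have hCe : C e * C e = 0 := by rw [← map_mul, he, map_zero]
  rw [← Finset.prod_one_add_mul_of_mul_self_eq_zero hCe, qProdDen, ← Finset.prod_mul_distrib]
  refine Finset.prod_congr rfl fun n hn => ?_
  have hn : n ≠ 0 := Nat.one_le_iff_ne_zero.mp (Finset.mem_Icc.mp hn).1
  have h1 := one_sub_C_mul_X_pow_mul_geomSeries (1 : T) hn
  rw [map_one, one_mul] at h1
  simpa only [map_mul, map_add, map_one, mul_assoc] using
    one_sub_mul_one_sub_eq_one_add_mul_of_mul_self_eq_zero hCe h1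
      (one_sub_C_mul_X_pow_mul_geomSeries x hn)

theorem coeff_sum_geomSeries_sub (x : T) (N : ℕ) :
    coeff N (∑ n ∈ Finset.Icc 1 N, (geomSeries 1 n - geomSeries x n)) =
      ∑ p ∈ qPairs N, (1 - x ^ p.2) := by
  rw [map_sum, ← sum_Icc_ite_dvd_eq_sum_qPairs N (fun d => 1 - x ^ d)]
  refine Finset.sum_congr rfl fun n _ => ?_
  rw [map_sub, coeff_geomSeries, coeff_geomSeries]
  split_ifs <;> simp

theorem coeff_qProdNum_mul_invOfUnit_qProdDen {e : T} (he : e * e = 0) (x : T) (N : ℕ) :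
    coeff N (qProdNum x (1 + e) N * invOfUnit (qProdDen x (1 + e) N) 1) =
      (if N = 0 then 1 else 0) + e * ∑ p ∈ qPairs N, (1 - x ^ p.2) := by
  rw [qProdNum_one_add_eq_mul_qProdDen he, mul_assoc,
    mul_invOfUnit _ _ (by rw [constantCoeff_qProdDen, Units.val_one]), mul_one, map_add,
    coeff_one, coeff_C_mul, coeff_sum_geomSeries_sub]

end QProduct

theorem map_coeff_FBO {T : Type*} [CommRing T] (φ : Rz →+* T) (N : ℕ) :
    φ (coeff N FBO) =
      coeff N (qProdNum (φ xe) (φ ye) N * invOfUnit (qProdDen (φ xe) (φ ye) N) 1) := by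
  rw [FBO, coeff_mk, ← coeff_map, map_mul]
  change coeff N (map φ (qProdNum xe ye N) * map φ (invOfUnit (qProdDen xe ye N) 1)) = _
  rw [map_invOfUnit_one φ (constantCoeff_qProdDen xe ye N), map_qProdNum, map_qProdDen]

theorem mk_inv_factorial_eq_exp : (mk fun j => (j.factorial : ℚ)⁻¹) = exp ℚ := by
  ext j
  simp [coeff_exp]

theorem toDualNumber_exp : toDualNumber ℚ (exp ℚ) = 1 + ε := by
  ext <;> simp [coeff_exp]

theorem coeff_one_sub_exp_pow {k : ℕ} (hk : k ≠ 0) (d : ℕ) :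
    coeff k (1 - exp ℚ ^ d) = -((d : ℚ) ^ k * (k.factorial : ℚ)⁻¹) := by
  rw [map_sub, coeff_one, if_neg hk, exp_pow_eq_rescale_exp, coeff_rescale, coeff_exp]
  simp

theorem coeff_neg_bracket {m : ℕ} (hm : 2 ≤ m) (N : ℕ) :
    coeff N (-bracket m) = ∑ p ∈ qPairs N, coeff (m - 1) (1 - exp ℚ ^ p.2) := by
  simp only [map_neg, bracket, coeff_mk, coeff_one_sub_exp_pow (show m - 1 ≠ 0 by omega),
    Finset.mul_sum, Finset.sum_neg_distrib, mul_comm]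

theorem zwCoeff_sub_one_one {m : ℕ} (hm : 2 ≤ m) : zwCoeff (m - 1) 1 = -bracket m := by
  set φ : Rz →+* (DualNumber ℚ)⟦X⟧ := map (toDualNumber ℚ)
  have hx : φ xe = map (inlHom ℚ ℚ) (exp ℚ) := by
    refine PowerSeries.ext fun k => ?_
    simp [φ, xe, coeff_exp, toDualNumber_C, algebraMap_eq_inl]
  have hy : φ ye = 1 + C ε := by
    rw [ye, map_C, mk_inv_factorial_eq_exp, toDualNumber_exp, map_add, map_one]
  have hε : (C ε : (DualNumber ℚ)⟦X⟧) * C ε = 0 := by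
    rw [← map_mul, eps_mul_eps, map_zero]
  ext N
  have hsum : ∑ p ∈ qPairs N, (1 - map (inlHom ℚ ℚ) (exp ℚ) ^ p.2) =
      map (inlHom ℚ ℚ) (∑ p ∈ qPairs N, (1 - exp ℚ ^ p.2)) := by
    simp only [map_sum, map_sub, map_one, map_pow]
  have hite : (coeff (m - 1) (if N = 0 then 1 else 0 : (DualNumber ℚ)⟦X⟧)).snd = 0 := by
    split_ifs <;> simp [coeff_one, show m - 1 ≠ 0 by omega]
  calc coeff N (zwCoeff (m - 1) 1) = (coeff (m - 1) (φ (coeff N FBO))).snd := by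
        simp [zwCoeff, φ, coeff_map]
    _ = (coeff (m - 1) ((if N = 0 then 1 else 0) + C ε *
          ∑ p ∈ qPairs N, (1 - PowerSeries.map (inlHom ℚ ℚ) (exp ℚ) ^ p.2))).snd := by
        rw [map_coeff_FBO, hx, hy, coeff_qProdNum_mul_invOfUnit_qProdDen hε]
    _ = ∑ p ∈ qPairs N, coeff (m - 1) (1 - exp ℚ ^ p.2) := by
        rw [hsum, map_add, snd_add, hite, coeff_C_mul, coeff_map, DualNumber.snd_mul, fst_eps,
          snd_eps, inlHom_apply, fst_inl, zero_mul, zero_add, zero_add, one_mul, map_sum]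
    _ = coeff N (-bracket m) := (coeff_neg_bracket hm N).symm

theorem zwCoeff_one_sub_one {m : ℕ} (hm : 2 ≤ m) : zwCoeff 1 (m - 1) = -bracket m := by
  set φ : Rz →+* DualNumber Rw := toDualNumber Rw
  have hx : φ xe = 1 + ε := by
    ext <;> simp [φ, xe]
  have hy : φ ye = inlHom Rw Rw (exp ℚ) := by
    rw [ye, toDualNumber_C, mk_inv_factorial_eq_exp, inlHom_apply]
  ext N
  have hsum : ∑ p ∈ qPairs N, (1 - inlHom Rw Rw (exp ℚ) ^ p.2) =
      inlHom Rw Rw (∑ p ∈ qPairs N, (1 - exp ℚ ^ p.2)) := by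
    simp only [map_sum, map_sub, map_one, map_pow]
  have hite : (if N = 0 then 1 else 0 : DualNumber Rw).snd = 0 := by
    split_ifs <;> simp
  calc coeff N (zwCoeff 1 (m - 1)) = coeff (m - 1) (φ (coeff N FBO)).snd := by
        simp [zwCoeff, φ]
    _ = coeff (m - 1) ((if N = 0 then 1 else 0) +
          ε * ∑ p ∈ qPairs N, (1 - inlHom Rw Rw (exp ℚ) ^ p.2)).snd := by
        rw [map_coeff_FBO, hx, hy, qProdNum_comm, qProdDen_comm,
          coeff_qProdNum_mul_invOfUnit_qProdDen eps_mul_eps]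
    _ = ∑ p ∈ qPairs N, coeff (m - 1) (1 - exp ℚ ^ p.2) := by
        rw [hsum, snd_add, hite, DualNumber.snd_mul, fst_eps, snd_eps, inlHom_apply, fst_inl,
          zero_mul, zero_add, zero_add, one_mul, map_sum]
    _ = coeff N (-bracket m) := (coeff_neg_bracket hm N).symm

/-- for every m ≥ 2, the coefficients of z^{m-1}w and of zw^{m-1} in
(q)_∞(xyq)_∞/((xq)_∞(yq)_∞) both equal -[m]. -/
theorem stmt8 (m : ℕ) (hm : 2 ≤ m) :
    zwCoeff (m - 1) 1 = -bracket m ∧ zwCoeff 1 (m - 1) = -bracket m :=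
  ⟨zwCoeff_sub_one_one hm, zwCoeff_one_sub_one hm⟩
end
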